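/- arXiv:2303.05188 — 10 statements merged into one kernel-verified Lean document; each statement's English description precedes it below -/
import Mathlib

section
/- Let C be a topological category in which d and r are open maps. Then d and r are local homeomorphisms if and only if the open local bisections form a base for the topology on C. -/
/-- A small category presented as a set of arrows with domain map `d`,
range map `r`, and a (total) composition `mul a b`, meaningful when `d a = r b`. -/
structure CatStruct (C : Type*) where
  d : C → C
  r : C → C
  mul : C → C → C
  r_d : ∀ a, r (d a) = d a
  d_d : ∀ a, d (d a) = d a
  r_r : ∀ a, r (r a) = r a
  d_r : ∀ a, d (r a) = r a
  d_mul : ∀ a b, d a = r b → d (mul a b) = d b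
  r_mul : ∀ a b, d a = r b → r (mul a b) = r a
  mul_assoc : ∀ a b c, d a = r b → d b = r c → mul (mul a b) c = mul a (mul b c)
  mul_d : ∀ a, mul a (d a) = a
  r_mul_self : ∀ a, mul (r a) a = a

namespace CatStruct

variable {C : Type*}

/-- `a` is an identity arrow. -/
def IsId (K : CatStruct C) (a : C) : Prop := K.d a = a

/-- The product of two subsets of arrows. -/
def setMul (K : CatStruct C) (A B : Set C) : Set C :=
  {c | ∃ a ∈ A, ∃ b ∈ B, K.d a = K.r b ∧ c = K.mul a b}

/-- A local bisection: `d` and `r` are injective on it. -/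
def IsLocalBisection (K : CatStruct C) (A : Set C) : Prop :=
  Set.InjOn K.d A ∧ Set.InjOn K.r A

end CatStruct

/-! A continuous open map is a local homeomorphism exactly when it is locally injective, and two
maps are locally injective exactly when the open sets on which both are injective form a base:
a basic neighbourhood of a point witnesses local injectivity, and conversely intersecting an open
set with neighbourhoods of injectivity of the two maps gives a basic one inside it. -/

open TopologicalSpace

theorem isLocalHomeomorph_iff_isLocallyInjective {X Y : Type*} [TopologicalSpace X]
    [TopologicalSpace Y] {f : X → Y} (hc : Continuous f) (ho : IsOpenMap f) :
    IsLocalHomeomorph f ↔ IsLocallyInjective f := by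
  refine ⟨IsLocalHomeomorph.isLocallyInjective, fun h x => ?_⟩
  obtain ⟨U, hU, hxU, hinj⟩ := h x
  have : Nonempty X := ⟨x⟩
  exact ⟨.ofContinuousOpen (hinj.toPartialEquiv f U) hc.continuousOn ho hU, hxU, rfl⟩

theorem isTopologicalBasis_isOpen_injOn_and_injOn_iff {X Y Z : Type*} [TopologicalSpace X]
    {f : X → Y} {g : X → Z} :
    IsTopologicalBasis {U : Set X | IsOpen U ∧ (U.InjOn f ∧ U.InjOn g)} ↔
      IsLocallyInjective f ∧ IsLocallyInjective g := by
  constructor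
  · intro hB
    have hcover : ∀ x : X, ∃ U, IsOpen U ∧ x ∈ U ∧ U.InjOn f ∧ U.InjOn g := fun x => by
      obtain ⟨U, ⟨hU, hUinj⟩, hxU, -⟩ := hB.exists_subset_of_mem_open (Set.mem_univ x) isOpen_univ
      exact ⟨U, hU, hxU, hUinj⟩
    exact ⟨fun x => (hcover x).imp fun U hU => ⟨hU.1, hU.2.1, hU.2.2.1⟩,
      fun x => (hcover x).imp fun U hU => ⟨hU.1, hU.2.1, hU.2.2.2⟩⟩
  · rintro ⟨hf, hg⟩
    refine isTopologicalBasis_of_isOpen_of_nhds (fun U hU => hU.1) fun x u hxu hu => ?_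
    obtain ⟨V, hV, hxV, hVf⟩ := hf x
    obtain ⟨W, hW, hxW, hWg⟩ := hg x
    exact ⟨u ∩ V ∩ W,
      ⟨(hu.inter hV).inter hW, hVf.mono fun y hy => hy.1.2, hWg.mono fun y hy => hy.2⟩,
      ⟨⟨hxu, hxV⟩, hxW⟩, fun y hy => hy.1.1⟩

theorem etale_iff_open_local_bisections_basis_general {C : Type*} [TopologicalSpace C]
    (K : CatStruct C)
    (hd : Continuous K.d) (hr : Continuous K.r)
    (hdo : IsOpenMap K.d) (hro : IsOpenMap K.r) :
    (IsLocalHomeomorph K.d ∧ IsLocalHomeomorph K.r) ↔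
      TopologicalSpace.IsTopologicalBasis
        {A : Set C | IsOpen A ∧ K.IsLocalBisection A} := by
  rw [isLocalHomeomorph_iff_isLocallyInjective hd hdo,
    isLocalHomeomorph_iff_isLocallyInjective hr hro]
  exact isTopologicalBasis_isOpen_injOn_and_injOn_iff.symm

/-- in a topological category with `d` and `r` open maps,
`d` and `r` are local homeomorphisms iff the open local bisections form a base. -/
theorem etale_iff_open_local_bisections_basis {C : Type*} [TopologicalSpace C]
    (K : CatStruct C)
    (hd : Continuous K.d) (hr : Continuous K.r)
    (hm : Continuous fun p : {p : C × C // K.d p.1 = K.r p.2} => K.mul p.1.1 p.1.2)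
    (hdo : IsOpenMap K.d) (hro : IsOpenMap K.r) :
    (IsLocalHomeomorph K.d ∧ IsLocalHomeomorph K.r) ↔
      TopologicalSpace.IsTopologicalBasis
        {A : Set C | IsOpen A ∧ K.IsLocalBisection A} :=
  etale_iff_open_local_bisections_basis_general K hd hr hdo hro
end

section
/- In an étale topological category C, the open partial isometries of the quantale Ω(C) of open subsets (with product UV = {uv : u ∈ U, v ∈ V, d(u) = r(v)}) are precisely the open local bisections of C. -/
/-- in an étale topological category, the open partial isometries of
the quantale of open subsets are precisely the open local bisections. -/
theorem open_partial_isometries_eq_open_local_bisections {C : Type*} [TopologicalSpace C]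
    (K : CatStruct C)
    (hd : Continuous K.d) (hr : Continuous K.r)
    (hm : Continuous fun p : {p : C × C // K.d p.1 = K.r p.2} => K.mul p.1.1 p.1.2)
    (hdl : IsLocalHomeomorph K.d) (hrl : IsLocalHomeomorph K.r)
    (U : Set C) (hU : IsOpen U) :
    (∀ V : Set C, IsOpen V → V ⊆ U →
        V = K.setMul (K.r '' V) U ∧ V = K.setMul U (K.d '' V)) ↔
      K.IsLocalBisection U := by
  constructor
  · intro h
    constructor
    · intro a ha b hb hab
      obtain ⟨e, hbe, hfe⟩ := hdl b
      have hVopen : IsOpen (U ∩ e.source) := hU.inter e.open_source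
      have hsub : U ∩ e.source ⊆ U := Set.inter_subset_left
      obtain ⟨_, h2⟩ := h (U ∩ e.source) hVopen hsub
      have haV : a ∈ U ∩ e.source := by
        rw [h2]
        refine ⟨a, ha, K.d b, ⟨b, ⟨hb, hbe⟩, rfl⟩, ?_, ?_⟩
        · rw [K.r_d, hab]
        · rw [← hab, K.mul_d]
      apply e.injOn haV.2 hbe
      rw [← hfe] at *
      exact hab
    · intro a ha b hb hab
      obtain ⟨e, hbe, hfe⟩ := hrl b
      have hVopen : IsOpen (U ∩ e.source) := hU.inter e.open_source
      have hsub : U ∩ e.source ⊆ U := Set.inter_subset_left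
      obtain ⟨h1, _⟩ := h (U ∩ e.source) hVopen hsub
      have haV : a ∈ U ∩ e.source := by
        rw [h1]
        refine ⟨K.r b, ⟨b, ⟨hb, hbe⟩, rfl⟩, a, ha, ?_, ?_⟩
        · rw [K.d_r, hab]
        · rw [← hab, K.r_mul_self]
      apply e.injOn haV.2 hbe
      rw [← hfe] at *
      exact hab
  · rintro ⟨hdi, hri⟩ V _ hVU
    constructor
    · ext c
      constructor
      · intro hc
        exact ⟨K.r c, ⟨c, hc, rfl⟩, c, hVU hc, by rw [K.d_r], by rw [K.r_mul_self]⟩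
      · rintro ⟨x, ⟨v, hv, rfl⟩, u, hu, hdr, rfl⟩
        have hrv : K.r v = K.r u := by rw [← K.d_r v, hdr]
        have : v = u := hri (hVU hv) hu hrv
        subst this
        rw [K.r_mul_self]
        exact hv
    · ext c
      constructor
      · intro hc
        exact ⟨c, hVU hc, K.d c, ⟨c, hc, rfl⟩, by rw [K.r_d], by rw [K.mul_d]⟩
      · rintro ⟨u, hu, x, ⟨v, hv, rfl⟩, hdr, rfl⟩
        have hdu : K.d u = K.d v := by rw [hdr, K.r_d]
        have : u = v := hdi hu (hVU hv) hdu
        subst this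
        rw [K.mul_d]
        exact hv
end

section
/- Let Q be a restriction quantal frame and let a, b be partial isometries in Q. Then a ∨ b is a partial isometry if and only if a and b are compatible, i.e., ab* = ba* and b⁺a = a⁺b. -/
/-- A restriction quantal frame: a frame `Q` with a monoid multiplication
distributing over arbitrary joins (a unital quantal frame), which is an
Ehresmann semigroup whose projections are exactly the elements below the
monoid unit `1` and whose unary operations `st` (`*`) and `pl` (`⁺`) preserve
joins, such that the top element is a join of partial isometries and the
partial isometries are closed under multiplication. -/
class RQF (Q : Type*) extends Order.Frame Q, Monoid Q where
  mul_sSup_distrib : ∀ (a : Q) (S : Set Q), a * sSup S = ⨆ b ∈ S, a * b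
  sSup_mul_distrib : ∀ (a : Q) (S : Set Q), sSup S * a = ⨆ b ∈ S, b * a
  st : Q → Q
  pl : Q → Q
  st_le_one : ∀ a : Q, st a ≤ 1
  pl_le_one : ∀ a : Q, pl a ≤ 1
  proj_comm : ∀ a b : Q, a ≤ 1 → b ≤ 1 → a * b = b * a
  proj_idem : ∀ a : Q, a ≤ 1 → a * a = a
  st_proj : ∀ a : Q, a ≤ 1 → st a = a
  pl_proj : ∀ a : Q, a ≤ 1 → pl a = a
  mul_st : ∀ a : Q, a * st a = a
  pl_mul : ∀ a : Q, pl a * a = a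
  st_mul_eq : ∀ a b : Q, st (a * b) = st (st a * b)
  pl_mul_eq : ∀ a b : Q, pl (a * b) = pl (a * pl b)
  st_sSup : ∀ S : Set Q, st (sSup S) = ⨆ a ∈ S, st a
  pl_sSup : ∀ S : Set Q, pl (sSup S) = ⨆ a ∈ S, pl a
  top_join_pi : sSup {a : Q | ∀ b, b ≤ a → b = pl b * a ∧ b = a * st b} = ⊤
  pi_mul_closed : ∀ a b : Q,
    (∀ c, c ≤ a → c = pl c * a ∧ c = a * st c) →
    (∀ c, c ≤ b → c = pl c * b ∧ c = b * st c) →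
    (∀ c, c ≤ a * b → c = pl c * (a * b) ∧ c = (a * b) * st c)

namespace RQF

variable {Q : Type*} [RQF Q]

/-- `a` is a partial isometry. -/
def PI (a : Q) : Prop := ∀ b, b ≤ a → b = pl b * a ∧ b = a * st b

/-- `a` and `b` are compatible. -/
def Compat (a b : Q) : Prop := a * st b = b * st a ∧ pl b * a = pl a * b

/-- A completely prime filter in `Q`: a proper filter such that whenever a
join lies in it, one of the joinands does. -/
def CPFilter (A : Set Q) : Prop :=
  A.Nonempty ∧
  (∀ a ∈ A, ∀ b : Q, a ≤ b → b ∈ A) ∧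
  (∀ a ∈ A, ∀ b ∈ A, a ⊓ b ∈ A) ∧
  (⊥ : Q) ∉ A ∧
  ∀ S : Set Q, sSup S ∈ A → ∃ s ∈ S, s ∈ A

/-- A completely prime filter in the frame `e↓ = 1↓` of projections. -/
def CPFilterProj (F : Set Q) : Prop :=
  F.Nonempty ∧
  (∀ f ∈ F, f ≤ (1 : Q)) ∧
  (∀ f ∈ F, ∀ g : Q, g ≤ (1 : Q) → f ≤ g → g ∈ F) ∧
  (∀ f ∈ F, ∀ g ∈ F, f ⊓ g ∈ F) ∧
  (⊥ : Q) ∉ F ∧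
  ∀ S : Set Q, (∀ s ∈ S, s ≤ (1 : Q)) → sSup S ∈ F → ∃ s ∈ S, s ∈ F

/-- Upward closure in `Q`. -/
def up (F : Set Q) : Set Q := {x | ∃ f ∈ F, f ≤ x}

/-- `d(A) = (A*)↑`. -/
def dF (A : Set Q) : Set Q := {x | ∃ a ∈ A, st a ≤ x}

/-- `r(A) = (A⁺)↑`. -/
def rF (A : Set Q) : Set Q := {x | ∃ a ∈ A, pl a ≤ x}

/-- `A · B = (AB)↑`. -/
def prodF (A B : Set Q) : Set Q := {x | ∃ a ∈ A, ∃ b ∈ B, a * b ≤ x}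

lemma mul_sup' (a x y : Q) : a * (x ⊔ y) = a * x ⊔ a * y := by
  rw [← sSup_pair, mul_sSup_distrib, iSup_pair]

lemma sup_mul' (a x y : Q) : (x ⊔ y) * a = x * a ⊔ y * a := by
  rw [← sSup_pair, sSup_mul_distrib, iSup_pair]

lemma mul_mono' {a b c d : Q} (h1 : a ≤ b) (h2 : c ≤ d) : a * c ≤ b * d := by
  have hb : b * c ≤ b * d := by
    have : b * (c ⊔ d) = b * c ⊔ b * d := mul_sup' b c d
    rw [sup_eq_right.mpr h2] at this
    exact le_sup_left.trans_eq this.symm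
  have ha' : a * c ≤ b * c := by
    have : (a ⊔ b) * c = a * c ⊔ b * c := sup_mul' c a b
    rw [sup_eq_right.mpr h1] at this
    exact le_sup_left.trans_eq this.symm
  exact ha'.trans hb

lemma pl_sup' (x y : Q) : pl (x ⊔ y) = pl x ⊔ pl y := by
  rw [← sSup_pair, pl_sSup, iSup_pair]

lemma st_sup' (x y : Q) : st (x ⊔ y) = st x ⊔ st y := by
  rw [← sSup_pair, st_sSup, iSup_pair]

lemma pl_mono' {x y : Q} (h : x ≤ y) : pl x ≤ pl y := by
  have := pl_sup' x y
  rw [sup_eq_right.mpr h] at this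
  exact le_sup_left.trans_eq this.symm

lemma st_mono' {x y : Q} (h : x ≤ y) : st x ≤ st y := by
  have := st_sup' x y
  rw [sup_eq_right.mpr h] at this
  exact le_sup_left.trans_eq this.symm

lemma proj_mul_le_one' {f g : Q} (hf : f ≤ 1) (hg : g ≤ 1) : f * g ≤ 1 := by
  have := mul_mono' hf hg
  simpa using this

/-- For projections `f ≤ g`, `f * g = f`. -/
lemma proj_absorb' {f g : Q} (hf : f ≤ 1) (hg : g ≤ 1) (h : f ≤ g) : f * g = f := by
  refine le_antisymm ?_ ?_
  · have := mul_mono' (le_refl f) hg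
    simpa using this
  · have := mul_mono' (le_refl f) h
    rwa [proj_idem f hf] at this

lemma pl_projmul' (x y : Q) : pl (pl x * y) = pl x * pl y := by
  rw [pl_mul_eq]
  exact pl_proj _ (proj_mul_le_one' (pl_le_one x) (pl_le_one y))

lemma st_mulproj' (x y : Q) : st (x * st y) = st x * st y := by
  rw [st_mul_eq]
  exact st_proj _ (proj_mul_le_one' (st_le_one x) (st_le_one y))

end RQF

open RQF in
/-- for partial isometries `a, b`, `a ⊔ b` is a partial isometry
iff `a` and `b` are compatible. -/
theorem pi_sup_iff_compat {Q : Type*} [RQF Q] {a b : Q}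
    (ha : PI a) (hb : PI b) :
    PI (a ⊔ b) ↔ Compat a b := by
  constructor
  · intro hab
    have h1 : a = pl a * (a ⊔ b) := (hab a le_sup_left).1
    rw [mul_sup', pl_mul] at h1
    have hple : pl a * b ≤ a := sup_eq_left.mp h1.symm
    have h2 : a = (a ⊔ b) * st a := (hab a le_sup_left).2
    rw [sup_mul', mul_st] at h2
    have hstle : b * st a ≤ a := sup_eq_left.mp h2.symm
    -- pl a * b = pl b * a
    have e1 : pl a * b = pl b * a := by
      have := (ha _ hple).1
      rw [pl_projmul'] at this
      calc pl a * b = pl a * pl b * a := this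
        _ = pl b * pl a * a := by rw [proj_comm (pl a) (pl b) (pl_le_one a) (pl_le_one b)]
        _ = pl b * (pl a * a) := by rw [mul_assoc]
        _ = pl b * a := by rw [pl_mul]
    -- b * st a = a * st b
    have e2 : b * st a = a * st b := by
      have := (ha _ hstle).2
      rw [st_mulproj'] at this
      calc b * st a = a * (st b * st a) := this
        _ = a * (st a * st b) := by rw [proj_comm (st b) (st a) (st_le_one b) (st_le_one a)]
        _ = a * st a * st b := by rw [mul_assoc]
        _ = a * st b := by rw [mul_st]
    exact ⟨e2.symm, e1.symm⟩
  · rintro ⟨hst, hpl⟩ c hc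
    set c1 := c ⊓ a with hc1def
    set c2 := c ⊓ b with hc2def
    have hcsplit : c = c1 ⊔ c2 := by
      rw [hc1def, hc2def, ← inf_sup_left, inf_eq_left.mpr hc]
    have hc1a : c1 ≤ a := inf_le_right
    have hc2b : c2 ≤ b := inf_le_right
    have h1 := ha c1 hc1a
    have h2 := hb c2 hc2b
    have hplc : pl c = pl c1 ⊔ pl c2 := by rw [hcsplit, pl_sup']
    have hstc : st c = st c1 ⊔ st c2 := by rw [hcsplit, st_sup']
    -- cross terms
    have cross1 : pl c1 * b ≤ c1 := by
      have habs : pl c1 * pl a = pl c1 :=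
        proj_absorb' (pl_le_one c1) (pl_le_one a) (pl_mono' hc1a)
      have : pl c1 * b = pl b * c1 := by
        calc pl c1 * b = pl c1 * pl a * b := by rw [habs]
          _ = pl c1 * (pl a * b) := by rw [mul_assoc]
          _ = pl c1 * (pl b * a) := by rw [hpl]
          _ = pl c1 * pl b * a := by rw [mul_assoc]
          _ = pl b * pl c1 * a := by rw [proj_comm (pl c1) (pl b) (pl_le_one c1) (pl_le_one b)]
          _ = pl b * (pl c1 * a) := by rw [mul_assoc]
          _ = pl b * c1 := by rw [← h1.1]
      rw [this]
      have := mul_mono' (pl_le_one b) (le_refl c1)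
      simpa using this
    have cross2 : pl c2 * a ≤ c2 := by
      have habs : pl c2 * pl b = pl c2 :=
        proj_absorb' (pl_le_one c2) (pl_le_one b) (pl_mono' hc2b)
      have : pl c2 * a = pl a * c2 := by
        calc pl c2 * a = pl c2 * pl b * a := by rw [habs]
          _ = pl c2 * (pl b * a) := by rw [mul_assoc]
          _ = pl c2 * (pl a * b) := by rw [← hpl]
          _ = pl c2 * pl a * b := by rw [mul_assoc]
          _ = pl a * pl c2 * b := by rw [proj_comm (pl c2) (pl a) (pl_le_one c2) (pl_le_one a)]
          _ = pl a * (pl c2 * b) := by rw [mul_assoc]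
          _ = pl a * c2 := by rw [← h2.1]
      rw [this]
      have := mul_mono' (pl_le_one a) (le_refl c2)
      simpa using this
    have cross3 : a * st c2 ≤ c2 := by
      have habs : st c2 * st b = st c2 :=
        proj_absorb' (st_le_one c2) (st_le_one b) (st_mono' hc2b)
      have heq : a * st c2 = b * st a * st c2 := by
        calc a * st c2 = a * (st c2 * st b) := by rw [habs]
          _ = a * (st b * st c2) := by rw [proj_comm (st c2) (st b) (st_le_one c2) (st_le_one b)]
          _ = a * st b * st c2 := by rw [mul_assoc]
          _ = b * st a * st c2 := by rw [hst]
      rw [heq]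
      calc b * st a * st c2 = b * (st a * st c2) := by rw [mul_assoc]
        _ ≤ b * st c2 := by
            have h' : st a * st c2 ≤ st c2 := by
              have := mul_mono' (st_le_one a) (le_refl (st c2))
              simpa using this
            exact mul_mono' (le_refl b) h'
        _ = c2 := h2.2.symm
    have cross4 : b * st c1 ≤ c1 := by
      have habs : st c1 * st a = st c1 :=
        proj_absorb' (st_le_one c1) (st_le_one a) (st_mono' hc1a)
      have heq : b * st c1 = a * st b * st c1 := by
        calc b * st c1 = b * (st c1 * st a) := by rw [habs]
          _ = b * (st a * st c1) := by rw [proj_comm (st c1) (st a) (st_le_one c1) (st_le_one a)]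
          _ = b * st a * st c1 := by rw [mul_assoc]
          _ = a * st b * st c1 := by rw [← hst]
      rw [heq]
      calc a * st b * st c1 = a * (st b * st c1) := by rw [mul_assoc]
        _ ≤ a * st c1 := by
            have h' : st b * st c1 ≤ st c1 := by
              have := mul_mono' (st_le_one b) (le_refl (st c1))
              simpa using this
            exact mul_mono' (le_refl a) h'
        _ = c1 := h1.2.symm
    constructor
    · -- c = pl c * (a ⊔ b)
      have expand : pl c * (a ⊔ b)
          = (pl c1 * a ⊔ pl c1 * b) ⊔ (pl c2 * a ⊔ pl c2 * b) := by
        rw [hplc, sup_mul', mul_sup', mul_sup']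
      refine le_antisymm ?_ ?_
      · calc c = c1 ⊔ c2 := hcsplit
          _ ≤ (pl c1 * a ⊔ pl c1 * b) ⊔ (pl c2 * a ⊔ pl c2 * b) :=
            sup_le (le_sup_of_le_left (h1.1.le.trans le_sup_left))
              (le_sup_of_le_right (h2.1.le.trans le_sup_right))
          _ = pl c * (a ⊔ b) := expand.symm
      · rw [expand]
        refine sup_le (sup_le ?_ ?_) (sup_le ?_ ?_)
        · exact h1.1.symm.le.trans (le_sup_left.trans hcsplit.ge)
        · exact cross1.trans (le_sup_left.trans hcsplit.ge)
        · exact cross2.trans (le_sup_right.trans hcsplit.ge)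
        · exact h2.1.symm.le.trans (le_sup_right.trans hcsplit.ge)
    · -- c = (a ⊔ b) * st c
      have expand : (a ⊔ b) * st c
          = (a * st c1 ⊔ a * st c2) ⊔ (b * st c1 ⊔ b * st c2) := by
        rw [hstc, sup_mul', mul_sup', mul_sup']
      refine le_antisymm ?_ ?_
      · calc c = c1 ⊔ c2 := hcsplit
          _ ≤ (a * st c1 ⊔ a * st c2) ⊔ (b * st c1 ⊔ b * st c2) :=
            sup_le (le_sup_of_le_left (h1.2.le.trans le_sup_left))
              (le_sup_of_le_right (h2.2.le.trans le_sup_right))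
          _ = (a ⊔ b) * st c := expand.symm
      · rw [expand]
        refine sup_le (sup_le ?_ ?_) (sup_le ?_ ?_)
        · exact h1.2.symm.le.trans (le_sup_left.trans hcsplit.ge)
        · exact cross3.trans (le_sup_right.trans hcsplit.ge)
        · exact cross4.trans (le_sup_left.trans hcsplit.ge)
        · exact h2.2.symm.le.trans (le_sup_right.trans hcsplit.ge)
end

section
/- Let Q be a restriction quantal frame. Then the set PI(Q) of partial isometries of Q forms a complete restriction monoid: for any projection f and any partial isometry a, fa = a(fa)* and af = (af)⁺a, every compatible subset has a join which is again a partial isometry, and multiplication distributes over such joins. -/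
namespace RQF

variable {Q : Type*} [RQF Q]

lemma mulLeL (c : Q) {a b : Q} (h : a ≤ b) : c * a ≤ c * b := by
  have hd := mul_sSup_distrib c {a, b}
  rw [sSup_pair, sup_eq_right.mpr h] at hd
  rw [hd]
  exact le_biSup _ (Set.mem_insert a {b})

lemma mulLeR (c : Q) {a b : Q} (h : a ≤ b) : a * c ≤ b * c := by
  have hd := sSup_mul_distrib c {a, b}
  rw [sSup_pair, sup_eq_right.mpr h] at hd
  rw [hd]
  exact le_biSup (fun x => x * c) (Set.mem_insert a {b})

lemma stMono {a b : Q} (h : a ≤ b) : st a ≤ st b := by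
  have hd := st_sSup ({a, b} : Set Q)
  rw [sSup_pair, sup_eq_right.mpr h] at hd
  rw [hd]
  exact le_biSup _ (Set.mem_insert a {b})

lemma plMono {a b : Q} (h : a ≤ b) : pl a ≤ pl b := by
  have hd := pl_sSup ({a, b} : Set Q)
  rw [sSup_pair, sup_eq_right.mpr h] at hd
  rw [hd]
  exact le_biSup _ (Set.mem_insert a {b})

lemma projMulInf {p q : Q} (hp : p ≤ 1) (hq : q ≤ 1) : p * q = p ⊓ q := by
  apply le_antisymm
  · exact le_inf ((mulLeL p hq).trans (by rw [mul_one]))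
      ((mulLeR q hp).trans (by rw [one_mul]))
  · calc p ⊓ q = (p ⊓ q) * (p ⊓ q) := (proj_idem _ (inf_le_left.trans hp)).symm
      _ ≤ p * q := le_trans (mulLeL _ inf_le_right) (mulLeR _ inf_le_left)

lemma mulBiSup (c : Q) (S : Set Q) (f : Q → Q) :
    c * (⨆ y ∈ S, f y) = ⨆ y ∈ S, c * f y := by
  rw [← sSup_image, mul_sSup_distrib, iSup_image]

lemma biSupMul (c : Q) (S : Set Q) (f : Q → Q) :
    (⨆ y ∈ S, f y) * c = ⨆ y ∈ S, f y * c := by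
  rw [← sSup_image, sSup_mul_distrib, iSup_image]

lemma stBiSup (S : Set Q) (f : Q → Q) :
    st (⨆ y ∈ S, f y) = ⨆ y ∈ S, st (f y) := by
  rw [← sSup_image, st_sSup, iSup_image]

lemma plBiSup (S : Set Q) (f : Q → Q) :
    pl (⨆ y ∈ S, f y) = ⨆ y ∈ S, pl (f y) := by
  rw [← sSup_image, pl_sSup, iSup_image]

end RQF

open RQF in
/-- the partial isometries of a restriction quantal frame form a
complete restriction monoid. -/
theorem pi_complete_restriction_monoid {Q : Type*} [RQF Q] :
    -- the monoid unit is a partial isometry and products of partial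
    -- isometries are partial isometries (so `PI Q` is a monoid)
    PI (1 : Q) ∧
    (∀ a b : Q, PI a → PI b → PI (a * b)) ∧
    -- the restriction identities hold
    (∀ f a : Q, f ≤ 1 → PI a → f * a = a * st (f * a) ∧ a * f = pl (a * f) * a) ∧
    -- every compatible subset of partial isometries has a join which is a
    -- partial isometry
    (∀ S : Set Q, (∀ x ∈ S, PI x) → (∀ x ∈ S, ∀ y ∈ S, Compat x y) →
      PI (sSup S)) ∧
    -- multiplication distributes over such joins
    (∀ (S : Set Q) (c : Q), (∀ x ∈ S, PI x) → (∀ x ∈ S, ∀ y ∈ S, Compat x y) →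
      (c * sSup S = ⨆ x ∈ S, c * x) ∧ (sSup S * c = ⨆ x ∈ S, x * c)) := by
  refine ⟨?_, ?_, ?_, ?_, ?_⟩
  · intro b hb
    rw [pl_proj b hb, st_proj b hb, mul_one, one_mul]
    exact ⟨rfl, rfl⟩
  · exact fun a b ha hb => pi_mul_closed a b ha hb
  · intro f a hf ha
    have h1 : f * a ≤ a := (mulLeR a hf).trans (by rw [one_mul])
    have h2 : a * f ≤ a := (mulLeL a hf).trans (by rw [mul_one])
    exact ⟨(ha (f * a) h1).2, (ha (a * f) h2).1⟩
  · intro S hPI hC c hc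
    have hc' : c = ⨆ y ∈ S, c ⊓ y := by
      rw [← inf_sSup_eq]; exact (inf_eq_left.mpr hc).symm
    constructor
    · -- c = pl c * sSup S
      apply le_antisymm
      · conv_lhs => rw [hc']
        apply iSup₂_le
        intro y hy
        calc c ⊓ y = pl (c ⊓ y) * y := (hPI y hy (c ⊓ y) inf_le_right).1
          _ ≤ pl c * y := mulLeR y (plMono inf_le_left)
          _ ≤ pl c * sSup S := mulLeL _ (le_sSup hy)
      · rw [mul_sSup_distrib]
        apply iSup₂_le
        intro x hx
        have hplc : pl c = ⨆ y ∈ S, pl (c ⊓ y) := by rw [← plBiSup, ← hc']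
        rw [hplc, biSupMul]
        apply iSup₂_le
        intro y hy
        set g := pl (c ⊓ y) with hg
        have hg1 : g ≤ (1 : Q) := pl_le_one _
        have hgy : g ≤ pl y := plMono inf_le_right
        have hgpl : g * pl y = g := by
          rw [projMulInf hg1 (pl_le_one y)]; exact inf_eq_left.mpr hgy
        calc g * x = g * (pl y * x) := by rw [← mul_assoc, hgpl]
          _ = g * (pl x * y) := by rw [(hC x hx y hy).2]
          _ = (g * pl x) * y := by rw [mul_assoc]
          _ ≤ g * y := mulLeR y ((mulLeL g (pl_le_one x)).trans (by rw [mul_one]))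
          _ = c ⊓ y := ((hPI y hy (c ⊓ y) inf_le_right).1).symm
          _ ≤ c := inf_le_left
    · -- c = sSup S * st c
      apply le_antisymm
      · conv_lhs => rw [hc']
        apply iSup₂_le
        intro y hy
        calc c ⊓ y = y * st (c ⊓ y) := (hPI y hy (c ⊓ y) inf_le_right).2
          _ ≤ y * st c := mulLeL y (stMono inf_le_left)
          _ ≤ sSup S * st c := mulLeR _ (le_sSup hy)
      · rw [sSup_mul_distrib]
        apply iSup₂_le
        intro x hx
        have hstc : st c = ⨆ y ∈ S, st (c ⊓ y) := by rw [← stBiSup, ← hc']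
        rw [hstc, mulBiSup]
        apply iSup₂_le
        intro y hy
        set g := st (c ⊓ y) with hg
        have hg1 : g ≤ (1 : Q) := st_le_one _
        have hgy : g ≤ st y := stMono inf_le_right
        have hgst : st y * g = g := by
          rw [projMulInf (st_le_one y) hg1]; exact inf_eq_right.mpr hgy
        calc x * g = (x * st y) * g := by rw [mul_assoc, hgst]
          _ = (y * st x) * g := by rw [(hC x hx y hy).1]
          _ = y * (st x * g) := by rw [mul_assoc]
          _ ≤ y * g := mulLeL y ((mulLeR g (st_le_one x)).trans (by rw [one_mul]))
          _ = c ⊓ y := ((hPI y hy (c ⊓ y) inf_le_right).2).symm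
          _ ≤ c := inf_le_left
  · intro S c _ _
    exact ⟨mul_sSup_distrib c S, sSup_mul_distrib c S⟩
end

section
/- Let Q be a restriction quantal frame with unit e. If F is a completely prime filter in the frame e↓ of projections, then the upward closure F↑ of F in Q is a completely prime filter in Q; moreover F↑ = G↑ implies F = G for completely prime filters F, G in e↓. -/
open RQF in
/-- if `F` is a completely prime filter in the frame of projections
`e↓` then `F↑` is a completely prime filter in `Q`, and `F ↦ F↑` is injective. -/
theorem up_of_proj_cpfilter {Q : Type*} [RQF Q] :
    (∀ F : Set Q, CPFilterProj F → CPFilter (up F)) ∧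
    (∀ F G : Set Q, CPFilterProj F → CPFilterProj G → up F = up G → F = G) := by
  constructor
  · rintro F ⟨⟨f0, hf0⟩, hle, hup, hmeet, hbot, hprime⟩
    refine ⟨⟨f0, f0, hf0, le_rfl⟩, ?_, ?_, ?_, ?_⟩
    · rintro a ⟨f, hf, hfa⟩ b hab
      exact ⟨f, hf, hfa.trans hab⟩
    · rintro a ⟨f, hf, hfa⟩ b ⟨g, hg, hgb⟩
      exact ⟨f ⊓ g, hmeet f hf g hg, inf_le_inf hfa hgb⟩
    · rintro ⟨f, hf, hfb⟩
      exact hbot (le_bot_iff.mp hfb ▸ hf)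
    · rintro S ⟨f, hf, hfS⟩
      have hfe : f = sSup ((fun s => f ⊓ s) '' S) := by
        rw [sSup_image]
        have : f ⊓ sSup S = ⨆ s ∈ S, f ⊓ s := inf_sSup_eq
        rw [← this, inf_eq_left.mpr hfS]
      have hmem : sSup ((fun s => f ⊓ s) '' S) ∈ F := hfe ▸ hf
      obtain ⟨t, ht, htF⟩ := hprime _ (by rintro t ⟨s, _, rfl⟩; exact inf_le_left.trans (hle f hf)) hmem
      obtain ⟨s, hs, rfl⟩ := ht
      exact ⟨s, hs, f ⊓ s, htF, inf_le_right⟩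
  · rintro F G hF hG h
    ext f
    constructor
    · intro hf
      have : f ∈ up G := h ▸ ⟨f, hf, le_rfl⟩
      obtain ⟨g, hg, hgf⟩ := this
      exact hG.2.2.1 g hg f (hF.2.1 f hf) hgf
    · intro hf
      have : f ∈ up F := h.symm ▸ ⟨f, hf, le_rfl⟩
      obtain ⟨g, hg, hgf⟩ := this
      exact hF.2.2.1 g hg f (hG.2.1 f hf) hgf
end

section
/- Let Q be a restriction quantal frame with unit e. A completely prime filter A in Q contains a projection if and only if it is of the form F↑ for some completely prime filter F in e↓; in this case F = A ∩ e↓. -/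
open RQF in
/-- a completely prime filter `A` in `Q` contains a projection iff
it is of the form `F↑` for a completely prime filter `F` of `e↓`, and then
`F = A ∩ e↓`. -/
theorem cpfilter_contains_projection_iff {Q : Type*} [RQF Q]
    (A : Set Q) (hA : CPFilter A) :
    ((∃ f ∈ A, f ≤ (1 : Q)) ↔ ∃ F : Set Q, CPFilterProj F ∧ A = up F) ∧
    (∀ F : Set Q, CPFilterProj F → A = up F → F = A ∩ {x : Q | x ≤ 1}) := by
  obtain ⟨hne, hup, hmeet, hbot, hprime⟩ := hA
  constructor
  · constructor
    · rintro ⟨f, hfA, hf1⟩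
      refine ⟨A ∩ {x : Q | x ≤ 1}, ⟨⟨f, hfA, hf1⟩, fun g hg => hg.2,
        fun g hg h h1 hgh => ⟨hup g hg.1 h hgh, h1⟩,
        fun g hg h hh => ⟨hmeet g hg.1 h hh.1, inf_le_left.trans hg.2⟩,
        fun hb => hbot hb.1,
        fun S hS hSF => ?_⟩, ?_⟩
      · obtain ⟨s, hsS, hsA⟩ := hprime S hSF.1
        exact ⟨s, hsS, hsA, hS s hsS⟩
      · ext a
        constructor
        · intro haA
          exact ⟨f ⊓ a, ⟨hmeet f hfA a haA, inf_le_left.trans hf1⟩, inf_le_right⟩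
        · rintro ⟨g, hg, hga⟩
          exact hup g hg.1 a hga
    · rintro ⟨F, ⟨⟨f, hfF⟩, hF1, _, _, _, _⟩, rfl⟩
      exact ⟨f, ⟨f, hfF, le_refl f⟩, hF1 f hfF⟩
  · rintro F ⟨_, hF1, hFup, _, _, _⟩ rfl
    ext a
    constructor
    · intro ha
      exact ⟨⟨a, ha, le_refl a⟩, hF1 a ha⟩
    · rintro ⟨⟨g, hgF, hga⟩, ha1⟩
      exact hFup g hgF a ha1 hga
end

section
/- Let A be a completely prime filter in a restriction quantal frame Q. Then A contains a projection if and only if a* ∈ A for every a ∈ A (equivalently, a⁺ ∈ A for every a ∈ A). -/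
lemma RQF.st_mono'_s9 {Q : Type*} [RQF Q] {a b : Q} (h : a ≤ b) : RQF.st a ≤ RQF.st b := by
  have hs := RQF.st_sSup ({a, b} : Set Q)
  rw [sSup_pair, sup_eq_right.mpr h, iSup_pair] at hs
  calc RQF.st a ≤ RQF.st a ⊔ RQF.st b := le_sup_left
    _ = RQF.st b := hs.symm

lemma RQF.pl_mono'_s9 {Q : Type*} [RQF Q] {a b : Q} (h : a ≤ b) : RQF.pl a ≤ RQF.pl b := by
  have hs := RQF.pl_sSup ({a, b} : Set Q)
  rw [sSup_pair, sup_eq_right.mpr h, iSup_pair] at hs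
  calc RQF.pl a ≤ RQF.pl a ⊔ RQF.pl b := le_sup_left
    _ = RQF.pl b := hs.symm

open RQF in
/-- a completely prime filter `A` contains a projection iff
`a* ∈ A` for every `a ∈ A` (equivalently, `a⁺ ∈ A` for every `a ∈ A`). -/
theorem cpfilter_identity_iff_star_closed {Q : Type*} [RQF Q]
    (A : Set Q) (hA : CPFilter A) :
    ((∃ f ∈ A, f ≤ (1 : Q)) ↔ ∀ a ∈ A, st a ∈ A) ∧
    ((∃ f ∈ A, f ≤ (1 : Q)) ↔ ∀ a ∈ A, pl a ∈ A) := by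
  obtain ⟨hne, hup, hinf, -, -⟩ := hA
  constructor
  · constructor
    · rintro ⟨f, hf, hf1⟩ a ha
      have hmem : a ⊓ f ∈ A := hinf a ha f hf
      have h1 : a ⊓ f ≤ 1 := le_trans inf_le_right hf1
      have heq : RQF.st (a ⊓ f) = a ⊓ f := RQF.st_proj _ h1
      exact hup _ hmem _ (heq ▸ RQF.st_mono'_s9 (inf_le_left : a ⊓ f ≤ a))
    · intro h
      obtain ⟨a, ha⟩ := hne
      exact ⟨RQF.st a, h a ha, RQF.st_le_one a⟩
  · constructor
    · rintro ⟨f, hf, hf1⟩ a ha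
      have hmem : a ⊓ f ∈ A := hinf a ha f hf
      have h1 : a ⊓ f ≤ 1 := le_trans inf_le_right hf1
      have heq : RQF.pl (a ⊓ f) = a ⊓ f := RQF.pl_proj _ h1
      exact hup _ hmem _ (heq ▸ RQF.pl_mono'_s9 (inf_le_left : a ⊓ f ≤ a))
    · intro h
      obtain ⟨a, ha⟩ := hne
      exact ⟨RQF.pl a, h a ha, RQF.pl_le_one a⟩
end

section
/- Let Q be a restriction quantal frame with unit e. There is an order isomorphism between the set of completely prime filters of Q that contain a projection (ordered by inclusion) and the set of completely prime filters of the frame e↓, given by A ↦ A ∩ e↓ with inverse F ↦ F↑. -/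
open RQF in
/-- `A ↦ A ∩ e↓` and `F ↦ F↑` are mutually inverse order
isomorphisms between the identity completely prime filters of `Q` and the
completely prime filters of the frame `e↓` of projections. -/
theorem order_iso_identity_cpfilters {Q : Type*} [RQF Q] :
    -- the two maps are well defined
    (∀ A : Set Q, CPFilter A → (∃ f ∈ A, f ≤ (1 : Q)) →
      CPFilterProj (A ∩ {x : Q | x ≤ 1})) ∧
    (∀ F : Set Q, CPFilterProj F →
      CPFilter (up F) ∧ ∃ f ∈ up F, f ≤ (1 : Q)) ∧
    -- they are mutually inverse
    (∀ A : Set Q, CPFilter A → (∃ f ∈ A, f ≤ (1 : Q)) →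
      up (A ∩ {x : Q | x ≤ 1}) = A) ∧
    (∀ F : Set Q, CPFilterProj F → up F ∩ {x : Q | x ≤ 1} = F) ∧
    -- they are order isomorphisms for inclusion
    (∀ A B : Set Q, CPFilter A → CPFilter B →
      (∃ f ∈ A, f ≤ (1 : Q)) → (∃ f ∈ B, f ≤ (1 : Q)) →
      (A ⊆ B ↔ A ∩ {x : Q | x ≤ 1} ⊆ B ∩ {x : Q | x ≤ 1})) := by
  refine ⟨?_, ?_, ?_, ?_, ?_⟩
  · rintro A ⟨_, hup, hmeet, hbot, hprime⟩ ⟨f, hfA, hf1⟩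
    refine ⟨⟨f, hfA, hf1⟩, fun g hg => hg.2, ?_, ?_, fun h => hbot h.1, ?_⟩
    · rintro g ⟨hgA, _⟩ h h1 hle
      exact ⟨hup g hgA h hle, h1⟩
    · rintro g ⟨hgA, hg1⟩ h ⟨hhA, _⟩
      exact ⟨hmeet g hgA h hhA, le_trans inf_le_left hg1⟩
    · rintro S hS ⟨hsA, _⟩
      obtain ⟨s, hsS, hsA⟩ := hprime S hsA
      exact ⟨s, hsS, hsA, hS s hsS⟩
  · rintro F ⟨⟨f, hfF⟩, h1, hup, hmeet, hbot, hprime⟩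
    refine ⟨⟨⟨f, ⟨f, hfF, le_rfl⟩⟩, ?_, ?_, ?_, ?_⟩, f, ⟨f, hfF, le_rfl⟩, h1 f hfF⟩
    · rintro a ⟨g, hg, hga⟩ b hab
      exact ⟨g, hg, hga.trans hab⟩
    · rintro a ⟨g, hg, hga⟩ b ⟨h, hh, hhb⟩
      exact ⟨g ⊓ h, hmeet g hg h hh, inf_le_inf hga hhb⟩
    · rintro ⟨g, hg, hgb⟩
      exact hbot (le_bot_iff.mp hgb ▸ hg)
    · rintro S ⟨g, hg, hgs⟩
      have key : sSup ((fun s => g ⊓ s) '' S) ∈ F := by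
        have : sSup ((fun s => g ⊓ s) '' S) = g ⊓ sSup S := by
          rw [inf_sSup_eq]
          simp [sSup_image]
        rw [this, inf_eq_left.mpr hgs]; exact hg
      obtain ⟨t, htS, htF⟩ := hprime _ (by
        rintro t ⟨s, _, rfl⟩
        exact le_trans inf_le_left (h1 g hg)) key
      obtain ⟨s, hsS, rfl⟩ := htS
      exact ⟨s, hsS, g ⊓ s, htF, inf_le_right⟩
  · rintro A ⟨_, hAup, hmeet, _, _⟩ ⟨f, hfA, hf1⟩
    ext a
    constructor
    · rintro ⟨g, ⟨hgA, _⟩, hga⟩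
      exact hAup g hgA a hga
    · intro haA
      exact ⟨a ⊓ f, ⟨hmeet a haA f hfA, le_trans inf_le_right hf1⟩, inf_le_left⟩
  · rintro F ⟨_, h1, hup, _, _, _⟩
    ext a
    constructor
    · rintro ⟨⟨g, hg, hga⟩, ha1⟩
      exact hup g hg a ha1 hga
    · intro h
      exact ⟨⟨a, h, le_rfl⟩, h1 a h⟩
  · rintro A B ⟨_, _, hAmeet, _, _⟩ ⟨_, hBup, _, _, _⟩ ⟨f, hfA, hf1⟩ _
    constructor
    · intro hAB x hx; exact ⟨hAB hx.1, hx.2⟩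
    · intro h a haA
      have : a ⊓ f ∈ B ∩ {x : Q | x ≤ 1} :=
        h ⟨hAmeet a haA f hfA, le_trans inf_le_right hf1⟩
      exact hBup _ this.1 a inf_le_left
end

section
/- Let A and B be completely prime filters in a restriction quantal frame Q with A* = B⁺ (equivalently d(A) = r(B)). Then A·B := (AB)↑, the upward closure of the set of products {ab : a ∈ A, b ∈ B}, is again a completely prime filter in Q. -/
section Aux

open RQF

variable {Q : Type*} [RQF Q]

lemma aux_mul_mono_right (a : Q) {b c : Q} (hbc : b ≤ c) : a * b ≤ a * c := by
  have h1 : a * sSup ({b, c} : Set Q) = ⨆ x ∈ ({b, c} : Set Q), a * x :=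
    mul_sSup_distrib a _
  have h2 : sSup ({b, c} : Set Q) = c := by
    rw [sSup_pair, sup_eq_right.mpr hbc]
  calc a * b ≤ ⨆ x ∈ ({b, c} : Set Q), a * x := le_biSup _ (Set.mem_insert _ _)
    _ = a * c := by rw [← h1, h2]

lemma aux_mul_mono_left {a b : Q} (c : Q) (hab : a ≤ b) : a * c ≤ b * c := by
  have h1 : sSup ({a, b} : Set Q) * c = ⨆ x ∈ ({a, b} : Set Q), x * c :=
    sSup_mul_distrib c _
  have h2 : sSup ({a, b} : Set Q) = b := by
    rw [sSup_pair, sup_eq_right.mpr hab]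
  calc a * c ≤ ⨆ x ∈ ({a, b} : Set Q), x * c := le_biSup (fun x : Q => x * c) (Set.mem_insert _ _)
    _ = b * c := by rw [← h1, h2]

lemma aux_st_mono {a b : Q} (hab : a ≤ b) : st a ≤ st b := by
  have h1 : st (sSup ({a, b} : Set Q)) = ⨆ x ∈ ({a, b} : Set Q), st x :=
    st_sSup _
  have h2 : sSup ({a, b} : Set Q) = b := by
    rw [sSup_pair, sup_eq_right.mpr hab]
  calc st a ≤ ⨆ x ∈ ({a, b} : Set Q), st x := le_biSup _ (Set.mem_insert _ _)
    _ = st b := by rw [← h1, h2]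

lemma aux_pl_mono {a b : Q} (hab : a ≤ b) : pl a ≤ pl b := by
  have h1 : pl (sSup ({a, b} : Set Q)) = ⨆ x ∈ ({a, b} : Set Q), pl x :=
    pl_sSup _
  have h2 : sSup ({a, b} : Set Q) = b := by
    rw [sSup_pair, sup_eq_right.mpr hab]
  calc pl a ≤ ⨆ x ∈ ({a, b} : Set Q), pl x := le_biSup _ (Set.mem_insert _ _)
    _ = pl b := by rw [← h1, h2]

lemma aux_bot_mul (a : Q) : (⊥ : Q) * a = ⊥ := by
  have := sSup_mul_distrib a (∅ : Set Q)
  simpa using this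

lemma aux_pl_bot : pl (⊥ : Q) = ⊥ := by
  have := pl_sSup (∅ : Set Q)
  simpa using this

/-- Every element of a completely prime filter can be cut down to lie below a
partial isometry while remaining in the filter. -/
lemma aux_exists_pi_inf {A : Set Q} (hA : CPFilter A) {a : Q} (ha : a ∈ A) :
    ∃ t : Q, PI t ∧ a ⊓ t ∈ A := by
  obtain ⟨-, -, -, -, hAprime⟩ := hA
  have htop : sSup {p : Q | PI p} = ⊤ := top_join_pi
  have hsup : sSup ((fun p => a ⊓ p) '' {p : Q | PI p}) = a := by
    rw [sSup_image, ← inf_sSup_eq, htop, inf_top_eq]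
  have hmem : sSup ((fun p => a ⊓ p) '' {p : Q | PI p}) ∈ A := by rw [hsup]; exact ha
  obtain ⟨x, hx, hxA⟩ := hAprime _ hmem
  obtain ⟨t, ht, rfl⟩ := hx
  exact ⟨t, ht, hxA⟩

end Aux

open RQF in
/-- if `A`, `B` are completely prime filters with `A* = B⁺`,
then `A · B = (AB)↑` is a completely prime filter. -/
theorem prod_cpfilter {Q : Type*} [RQF Q]
    (A B : Set Q) (hA : CPFilter A) (hB : CPFilter B)
    (h : st '' A = pl '' B) :
    CPFilter (prodF A B) := by
  obtain ⟨⟨a0, ha0⟩, hAup, hAmeet, hAbot, hAprime⟩ := hA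
  obtain ⟨⟨b0, hb0⟩, hBup, hBmeet, hBbot, hBprime⟩ := hB
  refine ⟨⟨a0 * b0, a0, ha0, b0, hb0, le_rfl⟩, ?_, ?_, ?_, ?_⟩
  · -- upward closed
    rintro x ⟨a, ha, b, hb, hab⟩ y hxy
    exact ⟨a, ha, b, hb, hab.trans hxy⟩
  · -- meet closed
    rintro x ⟨a1, ha1, b1, hb1, h1⟩ y ⟨a2, ha2, b2, hb2, h2⟩
    refine ⟨a1 ⊓ a2, hAmeet _ ha1 _ ha2, b1 ⊓ b2, hBmeet _ hb1 _ hb2, le_inf ?_ ?_⟩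
    · exact le_trans (le_trans (aux_mul_mono_left _ inf_le_left)
        (aux_mul_mono_right _ inf_le_left)) h1
    · exact le_trans (le_trans (aux_mul_mono_left _ inf_le_right)
        (aux_mul_mono_right _ inf_le_right)) h2
  · -- bottom not in
    rintro ⟨a, ha, b, hb, hab⟩
    have hplb : pl b ∈ st '' A := by rw [h]; exact ⟨b, hb, rfl⟩
    obtain ⟨a1, ha1, hst1⟩ := hplb
    set a' := a ⊓ a1 with ha'def
    have ha' : a' ∈ A := hAmeet _ ha _ ha1
    have h1 : st a' ≤ pl b := le_of_le_of_eq (aux_st_mono inf_le_right) hst1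
    have h2 : a' * b = ⊥ :=
      le_bot_iff.mp (le_trans (aux_mul_mono_left _ inf_le_left) hab)
    have h3 : pl a' ≤ pl (a' * b) := by
      rw [pl_mul_eq]
      calc pl a' = pl (a' * st a') := by rw [mul_st]
        _ ≤ pl (a' * pl b) := aux_pl_mono (aux_mul_mono_right _ h1)
    have h4 : pl a' = ⊥ := by
      rw [h2, aux_pl_bot] at h3
      exact le_bot_iff.mp h3
    have h5 : a' = ⊥ := by
      have := pl_mul a'
      rw [h4, aux_bot_mul] at this
      exact this.symm
    exact hAbot (h5 ▸ ha')
  · -- completely prime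
    rintro S ⟨a, ha, b, hb, hab⟩
    -- reduce b below a partial isometry
    obtain ⟨u, hu, hbu⟩ := aux_exists_pi_inf ⟨⟨b0, hb0⟩, hBup, hBmeet, hBbot, hBprime⟩ hb
    set b' := b ⊓ u with hb'def
    have hb'B : b' ∈ B := hbu
    have hb'u : b' ≤ u := inf_le_right
    have hb'b : b' ≤ b := inf_le_left
    -- reduce a below a partial isometry
    obtain ⟨t, ht, hat⟩ := aux_exists_pi_inf ⟨⟨a0, ha0⟩, hAup, hAmeet, hAbot, hAprime⟩ ha
    -- cut a down so that st a₂ ≤ pl b'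
    have hplb' : pl b' ∈ st '' A := by rw [h]; exact ⟨b', hb'B, rfl⟩
    obtain ⟨a1, ha1, hst1⟩ := hplb'
    set a2 := a ⊓ t ⊓ a1 with ha2def
    have ha2 : a2 ∈ A := hAmeet _ hat _ ha1
    have ha2t : a2 ≤ t := le_trans inf_le_left inf_le_right
    have ha2a : a2 ≤ a := le_trans inf_le_left inf_le_left
    have hsta2 : st a2 ≤ pl b' := le_of_le_of_eq (aux_st_mono inf_le_right) hst1
    have htu : PI (t * u) := pi_mul_closed t u ht hu
    set c := a2 * b' with hcdef
    have hcS : c ≤ sSup S :=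
      le_trans (le_trans (aux_mul_mono_left _ ha2a) (aux_mul_mono_right _ hb'b)) hab
    have hctu : c ≤ t * u :=
      le_trans (aux_mul_mono_left _ ha2t) (aux_mul_mono_right _ hb'u)
    -- c as a join of its meets with elements of S
    set M : Set Q := (fun s => c ⊓ s) '' S with hMdef
    have hcM : c = sSup M := by
      rw [hMdef, sSup_image, ← inf_sSup_eq, inf_eq_left.mpr hcS]
    -- pl a2 ≤ pl c
    have hplc : pl a2 ≤ pl c := by
      rw [hcdef, pl_mul_eq]
      calc pl a2 = pl (a2 * st a2) := by rw [mul_st]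
        _ ≤ pl (a2 * pl b') := aux_pl_mono (aux_mul_mono_right _ hsta2)
    -- a2 ≤ sSup of the products pl(c ⊓ s) * a2
    have key : a2 ≤ sSup ((fun x => x * a2) '' (pl '' M)) := by
      have e1 : pl c = sSup (pl '' M) := by
        rw [hcM, pl_sSup, sSup_image]
      have e2 : sSup (pl '' M) * a2 = sSup ((fun x => x * a2) '' (pl '' M)) := by
        rw [sSup_mul_distrib, sSup_image]
      calc a2 = pl a2 * a2 := (pl_mul a2).symm
        _ ≤ pl c * a2 := aux_mul_mono_left _ hplc
        _ = sSup ((fun x => x * a2) '' (pl '' M)) := by rw [e1, e2]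
    have hsupA : sSup ((fun x => x * a2) '' (pl '' M)) ∈ A := hAup _ ha2 _ key
    obtain ⟨y, hy, hyA⟩ := hAprime _ hsupA
    obtain ⟨z, hz, rfl⟩ := hy
    obtain ⟨m, hm, rfl⟩ := hz
    obtain ⟨s, hsS, rfl⟩ := hm
    -- (pl (c ⊓ s) * a2) * b' ≤ c ⊓ s ≤ s
    have hcs_tu : c ⊓ s ≤ t * u := le_trans inf_le_left hctu
    have hcs_eq : c ⊓ s = pl (c ⊓ s) * (t * u) := (htu _ hcs_tu).1
    have hfinal : (pl (c ⊓ s) * a2) * b' ≤ s := by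
      calc (pl (c ⊓ s) * a2) * b' = pl (c ⊓ s) * (a2 * b') := by rw [mul_assoc]
        _ ≤ pl (c ⊓ s) * (t * u) := aux_mul_mono_right _ hctu
        _ = c ⊓ s := hcs_eq.symm
        _ ≤ s := inf_le_right
    exact ⟨s, hsS, pl (c ⊓ s) * a2, hyA, b', hb'B, hfinal⟩
end

section
/- Let Q be a restriction quantal frame. For a ∈ Q let X_a denote the set of completely prime filters of Q containing a. Then the collection τ = {X_a : a a partial isometry of Q} is a base for a topology on the set C(Q) of completely prime filters, and moreover every X_a (for arbitrary a ∈ Q) is open in this topology. -/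
namespace RQF

variable {Q : Type*} [RQF Q]

lemma mul_sup_left (c a b : Q) : c * (a ⊔ b) = c * a ⊔ c * b := by
  rw [← sSup_pair, RQF.mul_sSup_distrib, iSup_pair]

lemma mul_le_mul_of_le {a b : Q} (c : Q) (h : a ≤ b) : c * a ≤ c * b := by
  have : c * (a ⊔ b) = c * a ⊔ c * b := mul_sup_left c a b
  rw [sup_eq_right.mpr h] at this
  rw [this]; exact le_sup_left

lemma sup_mul_right (c a b : Q) : (a ⊔ b) * c = a * c ⊔ b * c := by
  rw [← sSup_pair, RQF.sSup_mul_distrib, iSup_pair]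

lemma mul_le_mul_of_le' {a b : Q} (c : Q) (h : a ≤ b) : a * c ≤ b * c := by
  have : (a ⊔ b) * c = a * c ⊔ b * c := sup_mul_right c a b
  rw [sup_eq_right.mpr h] at this
  rw [this]; exact le_sup_left

lemma PI.mono {a c : Q} (ha : PI a) (hca : c ≤ a) : PI c := by
  intro b hbc
  obtain ⟨h1, h2⟩ := ha b (hbc.trans hca)
  constructor
  · apply le_antisymm
    · calc b = pl b * b := (RQF.pl_mul b).symm
        _ ≤ pl b * c := mul_le_mul_of_le _ hbc
    · calc pl b * c ≤ pl b * a := mul_le_mul_of_le _ hca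
        _ = b := h1.symm
  · apply le_antisymm
    · calc b = b * st b := (RQF.mul_st b).symm
        _ ≤ c * st b := mul_le_mul_of_le' _ hbc
    · calc c * st b ≤ a * st b := mul_le_mul_of_le' _ hca
        _ = b := h2.symm

lemma exists_pi_mem {A : Set Q} (hA : CPFilter A) {x : Q} (hx : x ∈ A) :
    ∃ p, PI p ∧ p ∈ A ∧ p ≤ x := by
  obtain ⟨-, hup, hinf, hbot, hprime⟩ := hA
  set T : Set Q := {a : Q | ∀ b, b ≤ a → b = pl b * a ∧ b = a * st b} with hTdef
  have hT : sSup T = ⊤ := RQF.top_join_pi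
  have hx' : sSup ((fun p => x ⊓ p) '' T) ∈ A := by
    have heq : sSup ((fun p => x ⊓ p) '' T) = x := by
      rw [sSup_image, ← inf_sSup_eq, hT, inf_top_eq]
    rwa [heq]
  obtain ⟨s, hs, hsA⟩ := hprime _ hx'
  obtain ⟨p, hpT, rfl⟩ := hs
  exact ⟨x ⊓ p, PI.mono hpT inf_le_right, hsA, inf_le_left⟩

end RQF

open RQF in
/-- the sets `X_a` for `a` a partial isometry form a base for a
topology on the set `C(Q)` of completely prime filters, in which every `X_a`
(for arbitrary `a`) is open. -/
theorem pi_sets_topological_basis {Q : Type*} [RQF Q] :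
    @TopologicalSpace.IsTopologicalBasis {A : Set Q // CPFilter A}
      (TopologicalSpace.generateFrom
        {S : Set {A : Set Q // CPFilter A} | ∃ a : Q, PI a ∧ S = {A | a ∈ A.1}})
      {S : Set {A : Set Q // CPFilter A} | ∃ a : Q, PI a ∧ S = {A | a ∈ A.1}} ∧
    ∀ a : Q, @IsOpen {A : Set Q // CPFilter A}
      (TopologicalSpace.generateFrom
        {S : Set {A : Set Q // CPFilter A} | ∃ a : Q, PI a ∧ S = {A | a ∈ A.1}})
      {A | a ∈ A.1} := by
  set Bset : Set (Set {A : Set Q // CPFilter A}) :=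
    {S | ∃ a : Q, PI a ∧ S = {A | a ∈ A.1}} with hB
  letI : TopologicalSpace {A : Set Q // CPFilter A} := TopologicalSpace.generateFrom Bset
  have nhds : ∀ u, TopologicalSpace.GenerateOpen Bset u →
      ∀ A, A ∈ u → ∃ v ∈ Bset, A ∈ v ∧ v ⊆ u := by
    intro u hu
    induction hu with
    | basic s hs => exact fun A hA => ⟨s, hs, hA, subset_rfl⟩
    | univ =>
        intro A _
        obtain ⟨x, hx⟩ := A.2.1
        obtain ⟨p, hp, hpA, -⟩ := exists_pi_mem A.2 hx
        exact ⟨{B | p ∈ B.1}, ⟨p, hp, rfl⟩, hpA, Set.subset_univ _⟩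
    | inter s t _ _ ihs iht =>
        intro A hA
        obtain ⟨v, ⟨a, hav, rfl⟩, hAv, hvs⟩ := ihs A hA.1
        obtain ⟨w, ⟨b, hbw, rfl⟩, hAw, hwt⟩ := iht A hA.2
        have hc : a ⊓ b ∈ A.1 := A.2.2.2.1 a hAv b hAw
        refine ⟨{B | a ⊓ b ∈ B.1}, ⟨a ⊓ b, PI.mono hav inf_le_left, rfl⟩, hc, ?_⟩
        intro B hB
        exact ⟨hvs (B.2.2.1 _ hB a inf_le_left), hwt (B.2.2.1 _ hB b inf_le_right)⟩
    | sUnion S _ ih =>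
        intro A hA
        obtain ⟨t, htS, hAt⟩ := hA
        obtain ⟨v, hv, hAv, hvt⟩ := ih t htS A hAt
        exact ⟨v, hv, hAv, hvt.trans (Set.subset_sUnion_of_mem htS)⟩
  constructor
  · refine TopologicalSpace.isTopologicalBasis_of_isOpen_of_nhds ?_ ?_
    · rintro u hu
      exact TopologicalSpace.GenerateOpen.basic _ hu
    · intro A u hAu hu
      exact nhds u hu A hAu
  · intro x
    have key : {A : {A : Set Q // CPFilter A} | x ∈ A.1} =
        ⋃ p ∈ {p : Q | PI p ∧ p ≤ x}, {A : {A : Set Q // CPFilter A} | p ∈ A.1} := by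
      ext A
      simp only [Set.mem_iUnion, Set.mem_setOf_eq]
      constructor
      · intro hx
        obtain ⟨p, hp, hpA, hpx⟩ := exists_pi_mem A.2 hx
        exact ⟨p, ⟨hp, hpx⟩, hpA⟩
      · rintro ⟨p, ⟨hp, hpx⟩, hpA⟩
        exact A.2.2.1 p hpA x hpx
    rw [key]
    refine isOpen_biUnion ?_
    rintro p ⟨hp, -⟩
    exact TopologicalSpace.GenerateOpen.basic _ ⟨p, hp, rfl⟩
end
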